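/- arXiv:2306.12114 — 2 statements merged into one kernel-verified Lean document; each statement's English description precedes it below -/
import Mathlib

section
/- Set ρ_n = t_{n+1}/t_n and assume that ρ = lim_{n→∞} ρ_n ∈ [0,1] exists. (i) If 0 ≤ ρ < 1/2, then 𝓜 is a Cantor set. (ii) If 1/2 < ρ < 1, then 𝓜 is a finite union of closed intervals. -/
open MeasureTheory Filter Topology

/-- The limiting cumulative distribution function `F_ε(z)` of the approximation
coefficients, for a generalised α-Lüroth expansion determined by the sequence
`t` (1-indexed, `t 1 = 1`) and the sign sequence `ε` (0-indexed: `ε n` is the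
paper's `ε_{n+1}`).  Here `a_n = t n - t (n+1)` and the `n`-th summand is
`a_n` if `a_n / t_{n+1-ε_n} < z` and `t_{n+1-ε_n}·z` otherwise. -/
noncomputable def F (t : ℕ → ℝ) (ε : ℕ → Fin 2) (z : ℝ) : ℝ :=
  ∑' n : ℕ,
    if (t (n + 1) - t (n + 2)) / t (n + 2 - (ε n : ℕ)) < z
    then t (n + 1) - t (n + 2)
    else t (n + 2 - (ε n : ℕ)) * z

/-- The expected average value `M_ε = ∫_[0,1] (1 - F_ε) dλ`. -/
noncomputable def Mavg (t : ℕ → ℝ) (ε : ℕ → Fin 2) : ℝ :=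
  ∫ z in Set.Icc (0 : ℝ) 1, (1 - F t ε z)

/-- `t` generates an α-Lüroth partition: `(t_n)_{n ≥ 1}` is a strictly decreasing
sequence in `(0,1]` with `t 1 = 1` tending to `0`. -/
structure IsLurothSeq (t : ℕ → ℝ) : Prop where
  t_one : t 1 = 1
  pos : ∀ n, 1 ≤ n → 0 < t n
  anti : ∀ n, 1 ≤ n → t (n + 1) < t n
  tendsto_zero : Tendsto t atTop (nhds 0)

/-- Concatenation `ωε` of a finite word `ω ∈ {0,1}^n` with a sequence `ε ∈ {0,1}^ℕ`. -/
def cat {n : ℕ} (w : Fin n → Fin 2) (ε : ℕ → Fin 2) : ℕ → Fin 2 :=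
  fun k => if h : k < n then w ⟨k, h⟩ else ε (k - n)

/-- The interval `I_ω = [M_{ω1̄}, M_{ω0̄}]`. -/
noncomputable def Iword (t : ℕ → ℝ) {n : ℕ} (w : Fin n → Fin 2) : Set ℝ :=
  Set.Icc (Mavg t (cat w fun _ => 1)) (Mavg t (cat w fun _ => 0))

/-- The set `𝓜 = {M_ε : ε ∈ {0,1}^ℕ}`. -/
noncomputable def calM (t : ℕ → ℝ) : Set ℝ :=
  Set.range (Mavg t)

/-- The quantity `g(k) = ∫_[0,1] (f_k^1 - f_k^0) dλ`. -/
noncomputable def gseq (t : ℕ → ℝ) (k : ℕ) : ℝ :=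
  if t (k + 1) / t k ≤ 1 / 2 then
    t k / 2 - t (k + 1) / 2 - (t (k + 1)) ^ 2 / (2 * t k)
  else
    (t k) ^ 2 / (2 * t (k + 1)) - (t (k + 1)) ^ 2 / (2 * t k)
      + 3 * t (k + 1) / 2 - 3 * t k / 2

/-- The gap/overlap function `G(n) = g(n+1) - Σ_{k ≥ n+2} g(k)`. -/
noncomputable def Gseq (t : ℕ → ℝ) (n : ℕ) : ℝ :=
  gseq t (n + 1) - ∑' k : ℕ, gseq t (n + 2 + k)

/-- The common length `I(n)` of the intervals `I_ω` for `ω ∈ {0,1}^n`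
(computed from the all-zeros word `ω = 0^n`). -/
noncomputable def Ilen (t : ℕ → ℝ) (n : ℕ) : ℝ :=
  Mavg t (fun _ => 0) - Mavg t (fun k => if k < n then 0 else 1)

/-- A Cantor set in `ℝ`: a nonempty compact set with empty interior and
no isolated points. -/
def IsCantorSet (S : Set ℝ) : Prop :=
  S.Nonempty ∧ IsCompact S ∧ interior S = ∅ ∧ ∀ x ∈ S, AccPt x (Filter.principal S)

namespace CalMAux

variable {t : ℕ → ℝ}

lemma lur_mono (ht : IsLurothSeq t) {m k : ℕ} (hm : 1 ≤ m) (hmk : m ≤ k) : t k ≤ t m := by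
  induction k, hmk using Nat.le_induction with
  | base => exact le_rfl
  | succ n hn ih => exact le_trans (ht.anti n (hm.trans hn)).le ih

lemma gseq_pos (ht : IsLurothSeq t) {k : ℕ} (hk : 1 ≤ k) : 0 < gseq t k := by
  have h0 : 0 < t k := ht.pos k hk
  have h1 : 0 < t (k + 1) := ht.pos _ (hk.trans (Nat.le_succ k))
  have h2 : t (k + 1) < t k := ht.anti k hk
  unfold gseq
  split_ifs with h
  · have h3 : 2 * t (k + 1) ≤ t k := by
      rw [div_le_iff₀ h0] at h; linarith
    rw [show t k / 2 - t (k + 1) / 2 - (t (k + 1)) ^ 2 / (2 * t k)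
        = (t k ^ 2 - t k * t (k + 1) - t (k + 1) ^ 2) / (2 * t k) by field_simp]
    apply div_pos; · nlinarith
    · linarith
  · push_neg at h
    rw [show (t k) ^ 2 / (2 * t (k + 1)) - (t (k + 1)) ^ 2 / (2 * t k)
        + 3 * t (k + 1) / 2 - 3 * t k / 2
        = (t k - t (k + 1)) ^ 3 / (2 * t k * t (k + 1)) by field_simp; ring]
    apply div_pos
    · exact pow_pos (sub_pos.2 h2) 3
    · positivity

lemma gseq_le (ht : IsLurothSeq t) {k : ℕ} (hk : 1 ≤ k) : gseq t k ≤ t k / 2 := by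
  have h0 : 0 < t k := ht.pos k hk
  have h1 : 0 < t (k + 1) := ht.pos _ (hk.trans (Nat.le_succ k))
  have h2 : t (k + 1) < t k := ht.anti k hk
  unfold gseq
  split_ifs with h
  · nlinarith [sq_nonneg (t (k+1)), div_nonneg (sq_nonneg (t (k+1))) (by linarith : (0:ℝ) ≤ 2 * t k)]
  · push_neg at h
    have h3 : t k < 2 * t (k + 1) := by
      rw [lt_div_iff₀ h0] at h; linarith
    rw [show (t k) ^ 2 / (2 * t (k + 1)) - (t (k + 1)) ^ 2 / (2 * t k)
        + 3 * t (k + 1) / 2 - 3 * t k / 2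
        = (t k - t (k + 1)) ^ 3 / (2 * t k * t (k + 1)) by field_simp; ring]
    rw [div_le_iff₀ (by positivity)]
    have ha0 : 0 < t k - t (k + 1) := sub_pos.2 h2
    have ha1 : t k - t (k + 1) < t (k + 1) := by linarith
    have e1 : (t k - t (k + 1)) ^ 3 ≤ t (k + 1) * (t k - t (k + 1)) ^ 2 := by nlinarith
    have e2 : (t k - t (k + 1)) ^ 2 ≤ t k ^ 2 := by nlinarith
    nlinarith [mul_le_mul_of_nonneg_left e2 h1.le]

/-- `φ t j n` is the integral over `[0,1]` of the `n`-th summand of `F` when `ε n = j`. -/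
noncomputable def phi (t : ℕ → ℝ) (j : Fin 2) (n : ℕ) : ℝ :=
  if 1 ≤ (t (n + 1) - t (n + 2)) / t (n + 2 - (j : ℕ)) then t (n + 2 - (j : ℕ)) / 2
  else (t (n + 1) - t (n + 2)) - (t (n + 1) - t (n + 2)) ^ 2 / (2 * t (n + 2 - (j : ℕ)))

lemma piece_integral {a d : ℝ} (ha : 0 ≤ a) (hd : 0 < d) :
    (∫ z in Set.Icc (0 : ℝ) 1, (if a / d < z then a else d * z)) =
      if 1 ≤ a / d then d / 2 else a - a ^ 2 / (2 * d) := by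
  have hc : 0 ≤ a / d := div_nonneg ha hd.le
  rw [MeasureTheory.integral_Icc_eq_integral_Ioc,
      ← intervalIntegral.integral_of_le (by norm_num : (0:ℝ) ≤ 1)]
  by_cases h1 : 1 ≤ a / d
  · rw [if_pos h1]
    rw [intervalIntegral.integral_congr (g := fun z => d * z) (by
      intro z hz
      rw [Set.uIcc_of_le (by norm_num : (0:ℝ) ≤ 1)] at hz
      have : ¬ a / d < z := not_lt.2 (hz.2.trans h1)
      simp [this])]
    rw [intervalIntegral.integral_const_mul, integral_id]
    ring
  · rw [if_neg h1]
    push_neg at h1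
    have hac : d * (a / d) = a := by field_simp
    have e1 : (∫ z in (0:ℝ)..(a/d), (if a / d < z then a else d * z))
        = ∫ z in (0:ℝ)..(a/d), d * z := by
      apply intervalIntegral.integral_congr
      intro z hz
      rw [Set.uIcc_of_le hc] at hz
      simp [not_lt.2 hz.2]
    have e2 : (∫ z in (a/d)..(1:ℝ), (if a / d < z then a else d * z))
        = ∫ z in (a/d)..(1:ℝ), a := by
      apply intervalIntegral.integral_congr
      intro z hz
      rw [Set.uIcc_of_le h1.le] at hz
      rcases lt_or_eq_of_le hz.1 with h | h
      · simp [h]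
      · simp [← h, hac]
    have i1 : IntervalIntegrable (fun z => if a / d < z then a else d * z) volume 0 (a/d) := by
      rw [intervalIntegrable_iff_integrableOn_Ioc_of_le hc]
      have hi : IntegrableOn (fun z : ℝ => d * z) (Set.Ioc 0 (a / d)) volume :=
        (continuous_const.mul continuous_id).integrableOn_Ioc
      refine hi.congr_fun ?_ measurableSet_Ioc
      intro z hz
      simp [not_lt.2 hz.2]
    have i2 : IntervalIntegrable (fun z => if a / d < z then a else d * z) volume (a/d) 1 := by
      rw [intervalIntegrable_iff_integrableOn_Ioc_of_le h1.le]
      have hi : IntegrableOn (fun _ : ℝ => a) (Set.Ioc (a / d) 1) volume :=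
        (continuous_const).integrableOn_Ioc
      refine hi.congr_fun ?_ measurableSet_Ioc
      intro z hz
      simp [hz.1]

    rw [← intervalIntegral.integral_add_adjacent_intervals i1 i2, e1, e2,
        intervalIntegral.integral_const_mul, integral_id, intervalIntegral.integral_const,
        smul_eq_mul]
    field_simp
    ring

lemma phi_nonneg (ht : IsLurothSeq t) (j : Fin 2) (n : ℕ) : 0 ≤ phi t j n := by
  have hj : (j : ℕ) ≤ 1 := Nat.lt_succ_iff.1 j.isLt
  have hd : 0 < t (n + 2 - (j : ℕ)) := ht.pos _ (by omega)
  have ha : 0 ≤ t (n + 1) - t (n + 2) := by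
    have := ht.anti (n + 1) (by omega); linarith
  unfold phi
  split_ifs with h
  · positivity
  · push_neg at h
    rw [div_lt_one hd] at h
    have h2 : (t (n + 1) - t (n + 2)) ^ 2 / (2 * t (n + 2 - (j : ℕ)))
        ≤ (t (n + 1) - t (n + 2)) / 2 := by
      rw [div_le_div_iff₀ (by positivity) (by norm_num)]
      nlinarith
    linarith

lemma phi_le (ht : IsLurothSeq t) (j : Fin 2) (n : ℕ) : phi t j n ≤ t (n + 1) := by
  have hj : (j : ℕ) ≤ 1 := Nat.lt_succ_iff.1 j.isLt
  have hd : 0 < t (n + 2 - (j : ℕ)) := ht.pos _ (by omega)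
  have hd' : t (n + 2 - (j : ℕ)) ≤ t (n + 1) := lur_mono ht (by omega) (by omega)
  have ht1 : 0 < t (n + 1) := ht.pos _ (by omega)
  have ha : 0 ≤ t (n + 1) - t (n + 2) := by
    have := ht.anti (n + 1) (by omega); linarith
  unfold phi
  split_ifs with h
  · linarith
  · have h2 : 0 ≤ (t (n + 1) - t (n + 2)) ^ 2 / (2 * t (n + 2 - (j : ℕ))) := by positivity
    have ht2 : 0 < t (n + 2) := ht.pos _ (by omega)
    linarith

lemma Mavg_eq (ht : IsLurothSeq t) (hsum : Summable fun n => t (n + 1)) (ε : ℕ → Fin 2) :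
    Mavg t ε = 1 - ∑' n, phi t (ε n) n := by
  classical
  set μ := volume.restrict (Set.Icc (0 : ℝ) 1) with hμ
  haveI : IsFiniteMeasure μ := by
    constructor
    rw [hμ, Measure.restrict_apply_univ, Real.volume_Icc]
    exact ENNReal.ofReal_lt_top
  set term : ℕ → ℝ → ℝ := fun n z =>
    if (t (n + 1) - t (n + 2)) / t (n + 2 - (ε n : ℕ)) < z
    then t (n + 1) - t (n + 2)
    else t (n + 2 - (ε n : ℕ)) * z with hterm
  have hd : ∀ n : ℕ, 0 < t (n + 2 - (ε n : ℕ)) := by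
    intro n
    have hj : ((ε n : ℕ)) ≤ 1 := Nat.lt_succ_iff.1 (ε n).isLt
    exact ht.pos _ (by omega)
  have hd' : ∀ n : ℕ, t (n + 2 - (ε n : ℕ)) ≤ t (n + 1) := by
    intro n
    have hj : ((ε n : ℕ)) ≤ 1 := Nat.lt_succ_iff.1 (ε n).isLt
    exact lur_mono ht (by omega) (by omega)
  have ht1 : ∀ n : ℕ, 0 < t (n + 1) := fun n => ht.pos _ (by omega)
  have ha : ∀ n : ℕ, 0 ≤ t (n + 1) - t (n + 2) := by
    intro n; have := ht.anti (n + 1) (by omega); linarith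
  have ha' : ∀ n : ℕ, t (n + 1) - t (n + 2) ≤ t (n + 1) := by
    intro n; have := ht.pos (n + 2) (by omega); linarith
  have hmeas : ∀ n, Measurable (term n) := by
    intro n
    exact Measurable.ite (measurableSet_Ioi) measurable_const
      (measurable_const.mul measurable_id)
  -- pointwise bounds on [0,1]
  have hb : ∀ n, ∀ z ∈ Set.Icc (0:ℝ) 1, 0 ≤ term n z ∧ term n z ≤ t (n + 1) := by
    intro n z hz
    rw [hterm]
    dsimp only
    split_ifs with h
    · exact ⟨ha n, ha' n⟩
    · constructor
      · exact mul_nonneg (hd n).le hz.1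
      · calc t (n + 2 - (ε n : ℕ)) * z ≤ t (n + 2 - (ε n : ℕ)) * 1 :=
              mul_le_mul_of_nonneg_left hz.2 (hd n).le
          _ ≤ t (n + 1) := by rw [mul_one]; exact hd' n
  -- global summability bounds (for all real z)
  have hsummable : ∀ z : ℝ, Summable fun n => term n z := by
    intro z
    apply Summable.of_norm_bounded (g := fun n => (1 + |z|) * t (n + 1))
      (hsum.mul_left _)
    intro n
    rw [hterm]
    dsimp only
    have h1 : 0 ≤ t (n+1) := (ht1 n).le
    split_ifs with h
    · rw [Real.norm_eq_abs, abs_of_nonneg (ha n)]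
      nlinarith [abs_nonneg z, ha' n]
    · rw [Real.norm_eq_abs, abs_mul, abs_of_nonneg (hd n).le]
      have h2 : |z| ≤ 1 + |z| := by linarith [abs_nonneg z]
      have := hd' n
      nlinarith [abs_nonneg z]
  have hF : ∀ z : ℝ, F t ε z = ∑' n, term n z := fun z => rfl
  -- integrability of each term
  have hInt : ∀ n, Integrable (term n) μ := by
    intro n
    apply Integrable.mono' (integrable_const (t (n + 1))) (hmeas n).aestronglyMeasurable
    rw [hμ]
    filter_upwards [ae_restrict_mem measurableSet_Icc] with z hz
    rw [Real.norm_eq_abs, abs_of_nonneg (hb n z hz).1]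
    exact (hb n z hz).2
  have hμuniv : (μ Set.univ).toReal = 1 := by
    rw [hμ, Measure.restrict_apply_univ, Real.volume_Icc]
    norm_num
  have hIntNorm : ∀ n, (∫ z, ‖term n z‖ ∂μ) ≤ t (n + 1) := by
    intro n
    calc (∫ z, ‖term n z‖ ∂μ) ≤ ∫ _, t (n + 1) ∂μ := by
          apply integral_mono_of_nonneg (Eventually.of_forall fun z => norm_nonneg _)
            (integrable_const _)
          rw [hμ]
          filter_upwards [ae_restrict_mem measurableSet_Icc] with z hz
          rw [Real.norm_eq_abs, abs_of_nonneg (hb n z hz).1]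
          exact (hb n z hz).2
      _ = t (n + 1) := by rw [integral_const, measureReal_def, hμuniv, one_smul]
  have hSum2 : Summable fun n => ∫ z, ‖term n z‖ ∂μ :=
    Summable.of_nonneg_of_le (fun n => integral_nonneg fun z => norm_nonneg _) hIntNorm hsum
  -- the exchange
  have hexch : ∑' n, (∫ z, term n z ∂μ) = ∫ z, F t ε z ∂μ := by
    rw [show (fun z => F t ε z) = fun z => ∑' n, term n z from funext hF]
    exact integral_tsum_of_summable_integral_norm hInt hSum2
  -- integrability of F
  have hFmeas : Measurable (F t ε) := by
    apply measurable_of_tendsto_metrizable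
      (f := fun N z => ∑ n ∈ Finset.range N, term n z)
      (fun N => Finset.measurable_sum _ fun n _ => hmeas n)
    rw [tendsto_pi_nhds]
    intro z
    rw [hF]
    exact (hsummable z).hasSum.tendsto_sum_nat
  have hFint : Integrable (F t ε) μ := by
    apply Integrable.mono' (integrable_const (∑' n, t (n + 1)))
      hFmeas.aestronglyMeasurable
    rw [hμ]
    filter_upwards [ae_restrict_mem measurableSet_Icc] with z hz
    rw [hF, Real.norm_eq_abs, abs_of_nonneg (tsum_nonneg fun n => (hb n z hz).1)]
    exact Summable.tsum_le_tsum (fun n => (hb n z hz).2) (hsummable z) hsum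
  have hone : (∫ _, (1:ℝ) ∂μ) = 1 := by rw [integral_const, measureReal_def, hμuniv, one_smul]
  have : Mavg t ε = (∫ _, (1:ℝ) ∂μ) - ∫ z, F t ε z ∂μ := by
    rw [Mavg]
    exact integral_sub (integrable_const 1) hFint
  rw [this, hone, ← hexch]
  congr 1
  apply tsum_congr
  intro n
  have : (∫ z, term n z ∂μ) = phi t (ε n) n := by
    rw [hμ, hterm]
    dsimp only
    rw [piece_integral (ha n) (hd n)]
    rfl
  rw [this]

lemma phi_diff (ht : IsLurothSeq t) (n : ℕ) (j : Fin 2) :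
    phi t 1 n - phi t j n = (1 - ((j : ℕ) : ℝ)) * gseq t (n + 1) := by
  have ht1 : 0 < t (n + 1) := ht.pos _ (by omega)
  have ht2 : 0 < t (n + 2) := ht.pos _ (by omega)
  have hlt : t (n + 2) < t (n + 1) := ht.anti (n + 1) (by omega)
  fin_cases j
  · -- j = 0
    show phi t 1 n - phi t 0 n = (1 - ((0:ℕ) : ℝ)) * gseq t (n + 1)
    have e1 : phi t 1 n = (t (n + 1) - t (n + 2))
        - (t (n + 1) - t (n + 2)) ^ 2 / (2 * t (n + 1)) := by
      unfold phi
      have hidx : n + 2 - ((1 : Fin 2) : ℕ) = n + 1 := rfl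
      rw [hidx, if_neg]
      rw [not_le, div_lt_one ht1]
      linarith
    rw [e1]
    unfold phi gseq
    have hidx : n + 2 - ((0 : Fin 2) : ℕ) = n + 2 := rfl
    rw [hidx]
    have hcond : (1 ≤ (t (n + 1) - t (n + 2)) / t (n + 2)) ↔ (t (n + 2) / t (n + 1) ≤ 1 / 2) := by
      rw [le_div_iff₀ ht2, div_le_iff₀ ht1, one_mul]
      constructor <;> intro h <;> linarith
    split_ifs with h1 h2
    · field_simp
      ring
    · exact absurd (hcond.1 h1) h2
    · exact absurd (hcond.2 (by assumption)) h1
    · field_simp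
      ring
  · -- j = 1
    show phi t 1 n - phi t 1 n = (1 - ((1:ℕ) : ℝ)) * gseq t (n + 1)
    simp

lemma summable_phi (ht : IsLurothSeq t) (hsum : Summable fun n => t (n + 1)) (ε : ℕ → Fin 2) :
    Summable fun n => phi t (ε n) n :=
  Summable.of_nonneg_of_le (fun n => phi_nonneg ht _ n) (fun n => phi_le ht _ n) hsum

lemma Mavg_decomp (ht : IsLurothSeq t) (hsum : Summable fun n => t (n + 1)) (ε : ℕ → Fin 2) :
    Mavg t ε = Mavg t (fun _ => 1)
      + ∑' n, (1 - ((ε n : ℕ) : ℝ)) * gseq t (n + 1) := by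
  rw [Mavg_eq ht hsum ε, Mavg_eq ht hsum fun _ => 1]
  have h1 := summable_phi ht hsum fun _ => 1
  have h2 := summable_phi ht hsum ε
  have e : ∑' n, (1 - ((ε n : ℕ) : ℝ)) * gseq t (n + 1)
      = ∑' n, (phi t 1 n - phi t (ε n) n) :=
    tsum_congr fun n => (phi_diff ht n (ε n)).symm
  rw [e, Summable.tsum_sub h1 h2]
  ring

lemma fin2_cast (j : Fin 2) : (((1 - j : Fin 2) : ℕ) : ℝ) = 1 - ((j : ℕ) : ℝ) := by
  fin_cases j <;> norm_num

lemma fin2_sub_sub (j : Fin 2) : 1 - (1 - j) = j := by fin_cases j <;> rfl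

lemma fin2_cast_le (j : Fin 2) : ((j : ℕ) : ℝ) ≤ 1 := by
  fin_cases j <;> norm_num

lemma fin2_cast_nonneg (j : Fin 2) : (0:ℝ) ≤ ((j : ℕ) : ℝ) := by positivity

lemma summable_t (ht : IsLurothSeq t) {ρ r : ℝ}
    (hlim : Tendsto (fun n => t (n + 1) / t n) atTop (nhds ρ))
    (hρr : ρ < r) (hr : r < 1) : Summable fun n => t (n + 1) := by
  have ev : ∀ᶠ k in atTop, t (k + 1) / t k < r := hlim.eventually (eventually_lt_nhds hρr)
  obtain ⟨N, hN⟩ := eventually_atTop.1 ev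
  apply summable_of_ratio_norm_eventually_le hr
  rw [eventually_atTop]
  refine ⟨N + 1, fun n hn => ?_⟩
  have hpos : 0 < t (n + 1) := ht.pos _ (by omega)
  have h := hN (n + 1) (by omega)
  rw [div_lt_iff₀ hpos] at h
  rw [Real.norm_eq_abs, Real.norm_eq_abs, abs_of_nonneg (ht.pos (n + 2) (by omega)).le,
    abs_of_nonneg hpos.le]
  linarith

lemma summable_s (ht : IsLurothSeq t) (hsum : Summable fun n => t (n + 1)) :
    Summable fun n => gseq t (n + 1) := by
  apply Summable.of_nonneg_of_le (fun n => (gseq_pos ht (by omega : 1 ≤ n + 1)).le)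
    (fun n => ?_) hsum
  have h1 := gseq_le ht (by omega : 1 ≤ n + 1)
  have h2 := ht.pos (n + 1) (by omega)
  linarith

lemma tail_tendsto {g : ℕ → ℝ} (hsum : Summable g) :
    Tendsto (fun n => ∑' k, g (k + n)) atTop (𝓝 0) := by
  have h : (fun n => ∑' k, g (k + n))
      = fun n => (∑' k, g k) - ∑ i ∈ Finset.range n, g i := by
    funext n
    have := Summable.sum_add_tsum_nat_add n hsum
    linarith
  rw [h]
  have h2 : Tendsto (fun _ : ℕ => ∑' k, g k) atTop (𝓝 (∑' k, g k)) := tendsto_const_nhds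
  simpa using h2.sub hsum.hasSum.tendsto_sum_nat

lemma Mavg_continuous (ht : IsLurothSeq t) (hsum : Summable fun n => t (n + 1)) :
    Continuous (Mavg t) := by
  have h : Mavg t = fun ε => Mavg t (fun _ => 1)
      + ∑' n, (1 - ((ε n : ℕ) : ℝ)) * gseq t (n + 1) :=
    funext (Mavg_decomp ht hsum)
  rw [h]
  apply continuous_const.add
  apply continuous_tsum (u := fun n => gseq t (n + 1))
  · intro n
    exact Continuous.comp (continuous_of_discreteTopology
      (f := fun j : Fin 2 => (1 - ((j : ℕ) : ℝ)) * gseq t (n + 1))) (continuous_apply n)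
  · exact summable_s ht hsum
  · intro n ε
    have hg := (gseq_pos ht (by omega : 1 ≤ n + 1)).le
    rw [Real.norm_eq_abs, abs_mul, abs_of_nonneg hg]
    have h1 : |1 - ((ε n : ℕ) : ℝ)| ≤ 1 := by
      rw [abs_le]
      constructor <;> [linarith [fin2_cast_le (ε n)]; linarith [fin2_cast_nonneg (ε n)]]
    nlinarith

/-- The summand appearing in `Mavg_decomp` is nonneg and bounded by `gseq`. -/
lemma u_bounds (ht : IsLurothSeq t) (ε : ℕ → Fin 2) (k : ℕ) :
    0 ≤ (1 - ((ε k : ℕ) : ℝ)) * gseq t (k + 1)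
    ∧ (1 - ((ε k : ℕ) : ℝ)) * gseq t (k + 1) ≤ gseq t (k + 1) := by
  have hg := (gseq_pos ht (by omega : 1 ≤ k + 1)).le
  have h1 := fin2_cast_le (ε k)
  have h2 := fin2_cast_nonneg (ε k)
  constructor <;> nlinarith

lemma summable_u (ht : IsLurothSeq t) (hsum : Summable fun n => t (n + 1)) (ε : ℕ → Fin 2) :
    Summable fun k => (1 - ((ε k : ℕ) : ℝ)) * gseq t (k + 1) :=
  Summable.of_nonneg_of_le (fun k => (u_bounds ht ε k).1) (fun k => (u_bounds ht ε k).2)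
    (summable_s ht hsum)

lemma calM_subset_cover (ht : IsLurothSeq t) (hsum : Summable fun n => t (n + 1)) (n : ℕ) :
    calM t ⊆ ⋃ (w : Fin n → Fin 2),
      Set.Icc (Mavg t (fun _ => 1) + ∑ k : Fin n, ((w k : ℕ) : ℝ) * gseq t ((k : ℕ) + 1))
        (Mavg t (fun _ => 1) + ∑ k : Fin n, ((w k : ℕ) : ℝ) * gseq t ((k : ℕ) + 1)
          + ∑' k, gseq t ((k + n) + 1)) := by
  rintro x ⟨ε, rfl⟩
  rw [Mavg_decomp ht hsum ε]
  have hus := summable_u ht hsum ε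
  have hss := summable_s ht hsum
  have hsplit := Summable.sum_add_tsum_nat_add
    (f := fun k => (1 - ((ε k : ℕ) : ℝ)) * gseq t (k + 1)) n hus
  refine Set.mem_iUnion.2 ⟨fun k => 1 - ε k, ?_⟩
  have hA : ∑ k : Fin n, (((1 - ε (k : ℕ) : Fin 2) : ℕ) : ℝ) * gseq t ((k : ℕ) + 1)
      = ∑ k ∈ Finset.range n, (1 - ((ε k : ℕ) : ℝ)) * gseq t (k + 1) := by
    rw [← Fin.sum_univ_eq_sum_range (fun k => (1 - ((ε k : ℕ) : ℝ)) * gseq t (k + 1)) n]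
    exact Finset.sum_congr rfl fun k _ => by rw [fin2_cast]
  have htail_nonneg : 0 ≤ ∑' k, (1 - ((ε (k + n) : ℕ) : ℝ)) * gseq t ((k + n) + 1) :=
    tsum_nonneg fun k => (u_bounds ht ε (k + n)).1
  have h1 : Summable fun k => (1 - ((ε (k + n) : ℕ) : ℝ)) * gseq t ((k + n) + 1) :=
    (summable_nat_add_iff (f := fun k => (1 - ((ε k : ℕ) : ℝ)) * gseq t (k + 1)) n).2 hus
  have h2 : Summable fun k => gseq t ((k + n) + 1) :=
    (summable_nat_add_iff (f := fun k => gseq t (k + 1)) n).2 hss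
  have htail_le := Summable.tsum_le_tsum (fun k => (u_bounds ht ε (k + n)).2) h1 h2
  constructor
  · rw [hA]
    have := htail_nonneg
    linarith [hsplit]
  · rw [hA]
    linarith [hsplit, htail_le]

lemma greedy {g : ℕ → ℝ} (hg0 : ∀ n, 0 ≤ g n) (hsum : Summable g)
    (hle : ∀ n, g n ≤ ∑' k, g (k + (n + 1))) {y : ℝ} (hy0 : 0 ≤ y)
    (hyT : y ≤ ∑' k, g k) : ∃ δ : ℕ → Fin 2, y = ∑' n, ((δ n : ℕ) : ℝ) * g n := by
  classical
  set r : ℕ → ℝ := fun n => Nat.rec y (fun m rm => if g m ≤ rm then rm - g m else rm) n with hr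
  have hr0 : r 0 = y := rfl
  have hrs : ∀ n, r (n + 1) = if g n ≤ r n then r n - g n else r n := fun n => rfl
  have htail : ∀ n, (∑' k, g (k + n)) = g n + ∑' k, g (k + (n + 1)) := by
    intro n
    rw [Summable.tsum_eq_zero_add ((summable_nat_add_iff (f := g) n).2 hsum)]
    congr 1
    · norm_num
    · apply tsum_congr; intro k; congr 1; omega
  have hinv : ∀ n, 0 ≤ r n ∧ r n ≤ ∑' k, g (k + n) := by
    intro n
    induction n with
    | zero =>
      refine ⟨hy0, ?_⟩
      rw [hr0]
      calc y ≤ ∑' k, g k := hyT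
        _ = ∑' k, g (k + 0) := by apply tsum_congr; intro k; norm_num
    | succ m ih =>
      rw [hrs m]
      split_ifs with h
      · refine ⟨by linarith, ?_⟩
        have := htail m
        linarith [ih.2]
      · push_neg at h
        exact ⟨ih.1, by linarith [hle m]⟩
  set δ : ℕ → Fin 2 := fun n => if g n ≤ r n then 1 else 0 with hδdef
  refine ⟨δ, ?_⟩
  have hδval : ∀ n, ((δ n : ℕ) : ℝ) = if g n ≤ r n then 1 else 0 := by
    intro n
    rw [hδdef]
    split_ifs with hh <;> simp [hh]
  have hpartial : ∀ n, (∑ k ∈ Finset.range n, ((δ k : ℕ) : ℝ) * g k) = y - r n := by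
    intro n
    induction n with
    | zero => simp [hr0]
    | succ m ih =>
      rw [Finset.sum_range_succ, ih, hrs m, hδval m]
      split_ifs with h
      · ring
      · ring
  have hδsum : Summable fun n => ((δ n : ℕ) : ℝ) * g n := by
    apply Summable.of_nonneg_of_le _ _ hsum
    · intro n
      exact mul_nonneg (by positivity) (hg0 n)
    · intro n
      have := fin2_cast_le (δ n)
      nlinarith [hg0 n]
  have hTto : Tendsto (fun n => ∑' k, g (k + n)) atTop (𝓝 0) := tail_tendsto hsum
  have hrto : Tendsto r atTop (𝓝 0) := by
    apply tendsto_of_tendsto_of_tendsto_of_le_of_le' tendsto_const_nhds hTto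
    · exact Eventually.of_forall fun n => (hinv n).1
    · exact Eventually.of_forall fun n => (hinv n).2
  have hto : Tendsto (fun n => ∑ k ∈ Finset.range n, ((δ k : ℕ) : ℝ) * g k) atTop (𝓝 y) := by
    rw [funext hpartial]
    have h2 : Tendsto (fun _ : ℕ => y) atTop (𝓝 y) := tendsto_const_nhds
    simpa using h2.sub hrto
  exact tendsto_nhds_unique hto hδsum.hasSum.tendsto_sum_nat

lemma calM_eq_union (ht : IsLurothSeq t) (hsum : Summable fun n => t (n + 1)) (N : ℕ)
    (hN : ∀ n, N ≤ n → gseq t (n + 1) ≤ ∑' k, gseq t ((k + (n + 1)) + 1)) :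
    calM t = ⋃ (w : Fin N → Fin 2),
      Set.Icc (Mavg t (fun _ => 1) + ∑ k : Fin N, ((w k : ℕ) : ℝ) * gseq t ((k : ℕ) + 1))
        (Mavg t (fun _ => 1) + ∑ k : Fin N, ((w k : ℕ) : ℝ) * gseq t ((k : ℕ) + 1)
          + ∑' k, gseq t ((k + N) + 1)) := by
  apply Set.Subset.antisymm (calM_subset_cover ht hsum N)
  rintro y hy
  obtain ⟨w, hw⟩ := Set.mem_iUnion.1 hy
  set c := Mavg t (fun _ => 1) with hc
  set A := ∑ k : Fin N, ((w k : ℕ) : ℝ) * gseq t ((k : ℕ) + 1) with hAdef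
  -- greedy on the shifted sequence
  have hss := summable_s ht hsum
  have hg0 : ∀ n, 0 ≤ gseq t ((n + N) + 1) := fun n => (gseq_pos ht (by omega)).le
  have hgsum : Summable fun n => gseq t ((n + N) + 1) :=
    (summable_nat_add_iff (f := fun k => gseq t (k + 1)) N).2 hss
  have hgle : ∀ n, gseq t ((n + N) + 1) ≤ ∑' k, gseq t (((k + (n + 1)) + N) + 1) := by
    intro n
    have h1 := hN (n + N) (by omega)
    calc gseq t ((n + N) + 1) ≤ ∑' k, gseq t ((k + ((n + N) + 1)) + 1) := h1
      _ = ∑' k, gseq t (((k + (n + 1)) + N) + 1) := by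
        apply tsum_congr; intro k; congr 2; omega
  obtain ⟨δ', hδ'⟩ := greedy (g := fun n => gseq t ((n + N) + 1)) hg0 hgsum hgle
    (y := y - (c + A)) (by linarith [hw.1]) (by linarith [hw.2])
  set δfull : ℕ → Fin 2 := fun k => if h : k < N then w ⟨k, h⟩ else δ' (k - N) with hδfull
  refine ⟨fun k => 1 - δfull k, ?_⟩
  rw [Mavg_decomp ht hsum]
  have hterm : ∀ k, (1 - (((1 - δfull k : Fin 2) : ℕ) : ℝ)) * gseq t (k + 1)
      = ((δfull k : ℕ) : ℝ) * gseq t (k + 1) := by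
    intro k
    congr 1
    rw [fin2_cast]
    ring
  have husum : Summable fun k => ((δfull k : ℕ) : ℝ) * gseq t (k + 1) := by
    apply Summable.of_nonneg_of_le _ _ hss
    · intro k; exact mul_nonneg (by positivity) (gseq_pos ht (by omega)).le
    · intro k
      have h1 : ((δfull k : ℕ) : ℝ) ≤ 1 := fin2_cast_le _
      nlinarith [(gseq_pos ht (by omega : 1 ≤ k + 1)).le]
  have e0 : (∑' k, (1 - (((1 - δfull k : Fin 2) : ℕ) : ℝ)) * gseq t (k + 1))
      = ∑' k, ((δfull k : ℕ) : ℝ) * gseq t (k + 1) := tsum_congr hterm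
  rw [e0]
  have hsplit := Summable.sum_add_tsum_nat_add
    (f := fun k => ((δfull k : ℕ) : ℝ) * gseq t (k + 1)) N husum
  have e1 : (∑ k ∈ Finset.range N, ((δfull k : ℕ) : ℝ) * gseq t (k + 1)) = A := by
    rw [hAdef, ← Fin.sum_univ_eq_sum_range
      (fun k => ((δfull k : ℕ) : ℝ) * gseq t (k + 1)) N]
    apply Finset.sum_congr rfl
    intro k _
    have : δfull (k : ℕ) = w k := by
      rw [hδfull]
      simp only [k.isLt, dif_pos]
    rw [this]
  have e2 : (∑' k, ((δfull (k + N) : ℕ) : ℝ) * gseq t ((k + N) + 1)) = y - (c + A) := by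
    rw [hδ']
    apply tsum_congr
    intro k
    have : δfull (k + N) = δ' k := by
      rw [hδfull]
      simp only [dif_neg (by omega : ¬ (k + N < N))]
      congr 1
      omega
    rw [this]
  rw [← hsplit, e1, e2]
  ring

noncomputable def hfun (x : ℝ) : ℝ := (1 - x) ^ 3 / (2 * x)

lemma gseq_eq_hfun (ht : IsLurothSeq t) {k : ℕ} (hk : 1 ≤ k) (h : 1 / 2 < t (k + 1) / t k) :
    gseq t k = t k * hfun (t (k + 1) / t k) := by
  have h0 : 0 < t k := ht.pos k hk
  have h1 : 0 < t (k + 1) := ht.pos _ (by omega)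
  unfold gseq hfun
  rw [if_neg (not_le.2 h)]
  field_simp
  ring

lemma gseq_ratio_tendsto (ht : IsLurothSeq t) {ρ : ℝ}
    (hlim : Tendsto (fun n => t (n + 1) / t n) atTop (nhds ρ))
    (h2 : 1 / 2 < ρ) (h1 : ρ < 1) :
    Tendsto (fun k => gseq t (k + 2) / gseq t (k + 1)) atTop (𝓝 ρ) := by
  have hρ0 : (0 : ℝ) < ρ := lt_trans (by norm_num) h2
  have hcont : ContinuousAt hfun ρ := by
    apply ContinuousAt.div
    · exact ((continuous_const.sub continuous_id).pow 3).continuousAt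
    · exact (continuous_const.mul continuous_id).continuousAt
    · exact (by positivity : (0:ℝ) < 2 * ρ).ne'
  have hH : hfun ρ ≠ 0 := by
    unfold hfun
    have hx : (0:ℝ) < 1 - ρ := by linarith
    positivity
  have l1 : Tendsto (fun k => t (k + 2) / t (k + 1)) atTop (𝓝 ρ) :=
    (hlim.comp (tendsto_add_atTop_nat 1)).congr fun k => rfl
  have l2 : Tendsto (fun k => t (k + 3) / t (k + 2)) atTop (𝓝 ρ) :=
    (hlim.comp (tendsto_add_atTop_nat 2)).congr fun k => rfl
  have hf1 : Tendsto (fun k => hfun (t (k + 2) / t (k + 1))) atTop (𝓝 (hfun ρ)) :=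
    hcont.tendsto.comp l1
  have hf2 : Tendsto (fun k => hfun (t (k + 3) / t (k + 2))) atTop (𝓝 (hfun ρ)) :=
    hcont.tendsto.comp l2
  have hψ : Tendsto (fun k => (t (k + 2) / t (k + 1))
      * (hfun (t (k + 3) / t (k + 2)) / hfun (t (k + 2) / t (k + 1)))) atTop
      (𝓝 (ρ * (hfun ρ / hfun ρ))) := l1.mul (hf2.div hf1 hH)
  rw [div_self hH, mul_one] at hψ
  apply hψ.congr'
  filter_upwards [l1.eventually_const_lt h2, l2.eventually_const_lt h2] with k hk1 hk2
  rw [gseq_eq_hfun ht (by omega : 1 ≤ k + 1) hk1, gseq_eq_hfun ht (by omega : 1 ≤ k + 2) hk2,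
    mul_div_mul_comm]

lemma gseq_ratio_pow (ht : IsLurothSeq t) {ρ : ℝ}
    (hlim : Tendsto (fun n => t (n + 1) / t n) atTop (nhds ρ))
    (h2 : 1 / 2 < ρ) (h1 : ρ < 1) (i : ℕ) :
    Tendsto (fun k => gseq t (k + 1 + i) / gseq t (k + 1)) atTop (𝓝 (ρ ^ i)) := by
  induction i with
  | zero =>
    have : (fun k => gseq t (k + 1 + 0) / gseq t (k + 1)) = fun _ => (1:ℝ) := by
      funext k
      rw [div_self (gseq_pos ht (by omega : 1 ≤ k + 1)).ne']
    rw [this, pow_zero]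
    exact tendsto_const_nhds
  | succ i ih =>
    have hbase := gseq_ratio_tendsto ht hlim h2 h1
    have l1 : Tendsto (fun k => gseq t (k + 2 + i) / gseq t (k + 2)) atTop (𝓝 (ρ ^ i)) :=
      (ih.comp (tendsto_add_atTop_nat 1)).congr fun k => rfl
    rw [pow_succ]
    apply (l1.mul hbase).congr
    intro k
    rw [div_mul_div_cancel₀ (gseq_pos ht (by omega : 1 ≤ k + 2)).ne']
    have e : k + 2 + i = k + 1 + (i + 1) := by omega
    rw [e]

lemma exists_N (ht : IsLurothSeq t) {ρ : ℝ}
    (hlim : Tendsto (fun n => t (n + 1) / t n) atTop (nhds ρ))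
    (hρ0 : 0 ≤ ρ) (h2 : 1 / 2 < ρ) (h1 : ρ < 1)
    (hsum : Summable fun n => t (n + 1)) :
    ∃ N, ∀ n, N ≤ n → gseq t (n + 1) ≤ ∑' k, gseq t ((k + (n + 1)) + 1) := by
  have hss := summable_s ht hsum
  have hgeo : Tendsto (fun m => ∑ i ∈ Finset.range m, ρ ^ (i + 1)) atTop
      (𝓝 (ρ * (1 - ρ)⁻¹)) := by
    have h := (hasSum_geometric_of_lt_one hρ0 h1).tendsto_sum_nat
    have h' := h.const_mul ρ
    apply h'.congr
    intro m
    rw [Finset.mul_sum]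
    exact Finset.sum_congr rfl fun i _ => by rw [pow_succ]; ring
  have hgt : 1 < ρ * (1 - ρ)⁻¹ := by
    rw [← div_eq_mul_inv, lt_div_iff₀ (by linarith : (0:ℝ) < 1 - ρ)]
    linarith
  obtain ⟨m, hm⟩ := (hgeo.eventually_const_lt hgt).exists
  have hsumr : Tendsto (fun k => ∑ i ∈ Finset.range m, gseq t (k + 1 + (i + 1)) / gseq t (k + 1))
      atTop (𝓝 (∑ i ∈ Finset.range m, ρ ^ (i + 1))) :=
    tendsto_finset_sum _ fun i _ => gseq_ratio_pow ht hlim h2 h1 (i + 1)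
  obtain ⟨N, hN⟩ := eventually_atTop.1 (hsumr.eventually_const_lt hm)
  refine ⟨N, fun n hn => ?_⟩
  have h3 := hN n hn
  have hgpos := gseq_pos ht (by omega : 1 ≤ n + 1)
  rw [← Finset.sum_div, lt_div_iff₀ hgpos, one_mul] at h3
  have hsummable : Summable fun k => gseq t ((k + (n + 1)) + 1) :=
    (summable_nat_add_iff (f := fun k => gseq t (k + 1)) (n + 1)).2 hss
  have hst := Summable.sum_le_tsum (Finset.range m)
    (fun i _ => (gseq_pos ht (by omega : 1 ≤ (i + (n + 1)) + 1)).le) hsummable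
  have e : (∑ i ∈ Finset.range m, gseq t (n + 1 + (i + 1)))
      = ∑ i ∈ Finset.range m, gseq t ((i + (n + 1)) + 1) :=
    Finset.sum_congr rfl fun i _ => by congr 1; omega
  rw [e] at h3
  linarith

lemma pow2_tail_tendsto (ht : IsLurothSeq t) {ρ : ℝ}
    (hlim : Tendsto (fun n => t (n + 1) / t n) atTop (nhds ρ))
    (hρ0 : 0 ≤ ρ) (hρ : ρ < 1 / 2) :
    Tendsto (fun n => (2:ℝ) ^ n * ∑' k, gseq t ((k + n) + 1)) atTop (𝓝 0) := by
  obtain ⟨r, hρr, hr2, hr0⟩ : ∃ r : ℝ, ρ < r ∧ r < 1 / 2 ∧ 0 < r :=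
    ⟨ρ / 2 + 1 / 4, by linarith, by linarith, by linarith⟩
  have hsum : Summable fun n => t (n + 1) := summable_t ht hlim hρr (by linarith)
  have hss := summable_s ht hsum
  obtain ⟨N₀, hN₀⟩ := eventually_atTop.1 (hlim.eventually (eventually_lt_nhds hρr))
  set N := N₀ + 1 with hNdef
  have hstep : ∀ k, N ≤ k → t (k + 1) ≤ r * t k := by
    intro k hk
    have hp : 0 < t k := ht.pos k (by omega)
    have h := hN₀ k (by omega)
    rw [div_lt_iff₀ hp] at h
    linarith
  have texp : ∀ j, t (N + j) ≤ t N * r ^ j := by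
    intro j; induction j with
    | zero => simp
    | succ i ih =>
      have h1 : t (N + i + 1) ≤ r * t (N + i) := hstep (N + i) (by omega)
      calc t (N + (i + 1)) = t (N + i + 1) := rfl
        _ ≤ r * t (N + i) := h1
        _ ≤ r * (t N * r ^ i) := by nlinarith
        _ = t N * r ^ (i + 1) := by ring
  have htail : ∀ n, N ≤ n →
      (∑' k, gseq t ((k + n) + 1)) ≤ t N * (r ^ (n - N) * r) * (1 - r)⁻¹ := by
    intro n hn
    have hgeo : Summable fun k : ℕ => t N * (r ^ (n - N) * r) * r ^ k :=
      (summable_geometric_of_lt_one hr0.le (by linarith)).mul_left _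
    have hb : ∀ k : ℕ, gseq t ((k + n) + 1) ≤ t N * (r ^ (n - N) * r) * r ^ k := by
      intro k
      have h4 : 0 < t ((k + n) + 1) := ht.pos _ (by omega)
      have h1 : gseq t ((k + n) + 1) ≤ t ((k + n) + 1) := by
        have := gseq_le ht (by omega : 1 ≤ (k + n) + 1)
        linarith
      have h2 : t (k + n + 1) ≤ t N * r ^ (k + n + 1 - N) := by
        have h := texp (k + n + 1 - N)
        have e : N + (k + n + 1 - N) = k + n + 1 := by omega
        rw [e] at h
        exact h
      have e2 : t N * r ^ (k + n + 1 - N) = t N * (r ^ (n - N) * r) * r ^ k := by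
        rw [mul_assoc, ← pow_succ, ← pow_add]
        congr 2
        omega
      rw [e2] at h2
      linarith
    calc (∑' k, gseq t ((k + n) + 1))
        ≤ ∑' k : ℕ, t N * (r ^ (n - N) * r) * r ^ k :=
          Summable.tsum_le_tsum hb ((summable_nat_add_iff (f := fun k => gseq t (k + 1)) n).2 hss) hgeo
      _ = t N * (r ^ (n - N) * r) * (1 - r)⁻¹ := by
          rw [tsum_mul_left, tsum_geometric_of_lt_one hr0.le (by linarith)]
  have hb2 : ∀ n, N ≤ n → (2:ℝ) ^ n * (∑' k, gseq t ((k + n) + 1))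
      ≤ ((2:ℝ) ^ N * t N * r * (1 - r)⁻¹) * (2 * r) ^ (n - N) := by
    intro n hn
    have h1 := htail n hn
    have h2 : (0:ℝ) ≤ 2 ^ n := by positivity
    have key : (2:ℝ) ^ n * (t N * (r ^ (n - N) * r) * (1 - r)⁻¹)
        = ((2:ℝ) ^ N * t N * r * (1 - r)⁻¹) * (2 * r) ^ (n - N) := by
      have e : (2:ℝ) ^ n = 2 ^ N * 2 ^ (n - N) := by
        rw [← pow_add]
        congr 1
        omega
      rw [e, mul_pow]
      ring
    calc (2:ℝ) ^ n * (∑' k, gseq t ((k + n) + 1))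
        ≤ (2:ℝ) ^ n * (t N * (r ^ (n - N) * r) * (1 - r)⁻¹) :=
          mul_le_mul_of_nonneg_left h1 h2
      _ = _ := key
  have hlim2 : Tendsto (fun n : ℕ => ((2:ℝ) ^ N * t N * r * (1 - r)⁻¹) * (2 * r) ^ (n - N))
      atTop (𝓝 0) := by
    have h0 : Tendsto (fun j : ℕ => (2 * r) ^ j) atTop (𝓝 0) :=
      tendsto_pow_atTop_nhds_zero_of_lt_one (by linarith) (by linarith)
    have h1 : Tendsto (fun n : ℕ => (2 * r) ^ (n - N)) atTop (𝓝 0) :=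
      h0.comp (tendsto_sub_atTop_nat N)
    simpa using h1.const_mul ((2:ℝ) ^ N * t N * r * (1 - r)⁻¹)
  apply tendsto_of_tendsto_of_tendsto_of_le_of_le' tendsto_const_nhds hlim2
  · apply Eventually.of_forall
    intro n
    have : 0 ≤ ∑' k, gseq t ((k + n) + 1) :=
      tsum_nonneg fun k => (gseq_pos ht (by omega : 1 ≤ (k + n) + 1)).le
    positivity
  · exact eventually_atTop.2 ⟨N, hb2⟩

end CalMAux

open CalMAux

/-- With `ρ_n = t_{n+1}/t_n`, assume `ρ = lim ρ_n ∈ [0,1]` exists.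
(i) If `0 ≤ ρ < 1/2` then `𝓜` is a Cantor set. (ii) If `1/2 < ρ < 1` then `𝓜`
is a finite union of closed intervals. -/
theorem calM_dichotomy (t : ℕ → ℝ) (ht : IsLurothSeq t)
    (ρ : ℝ) (hlim : Tendsto (fun n => t (n + 1) / t n) atTop (nhds ρ))
    (hρ₀ : 0 ≤ ρ) (hρ₁ : ρ ≤ 1) :
    (ρ < 1 / 2 → IsCantorSet (calM t)) ∧
    (1 / 2 < ρ → ρ < 1 →
      ∃ (K : ℕ) (J : Fin K → Set ℝ),
        (∀ k, ∃ a b : ℝ, a ≤ b ∧ J k = Set.Icc a b) ∧ calM t = ⋃ k, J k) := by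
  constructor
  · -- Cantor case
    intro hρhalf
    have hsum : Summable fun n => t (n + 1) := summable_t ht hlim hρhalf (by norm_num)
    have hss := summable_s ht hsum
    refine ⟨⟨Mavg t (fun _ => 0), ⟨_, rfl⟩⟩, isCompact_range (Mavg_continuous ht hsum), ?_, ?_⟩
    · -- empty interior via measure zero
      have hcover : ∀ n : ℕ, volume (calM t)
          ≤ ENNReal.ofReal ((2:ℝ) ^ n * ∑' k, gseq t ((k + n) + 1)) := by
        intro n
        have htnn : 0 ≤ ∑' k, gseq t ((k + n) + 1) :=
          tsum_nonneg fun k => (gseq_pos ht (by omega : 1 ≤ (k + n) + 1)).le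
        calc volume (calM t)
            ≤ volume (⋃ (w : Fin n → Fin 2),
              Set.Icc (Mavg t (fun _ => 1) + ∑ k : Fin n, ((w k : ℕ) : ℝ) * gseq t ((k : ℕ) + 1))
                (Mavg t (fun _ => 1) + ∑ k : Fin n, ((w k : ℕ) : ℝ) * gseq t ((k : ℕ) + 1)
                  + ∑' k, gseq t ((k + n) + 1))) :=
              measure_mono (calM_subset_cover ht hsum n)
          _ ≤ ∑' (w : Fin n → Fin 2), volume
              (Set.Icc (Mavg t (fun _ => 1) + ∑ k : Fin n, ((w k : ℕ) : ℝ) * gseq t ((k : ℕ) + 1))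
                (Mavg t (fun _ => 1) + ∑ k : Fin n, ((w k : ℕ) : ℝ) * gseq t ((k : ℕ) + 1)
                  + ∑' k, gseq t ((k + n) + 1))) := measure_iUnion_le _
          _ = ∑' (_ : Fin n → Fin 2), ENNReal.ofReal (∑' k, gseq t ((k + n) + 1)) := by
              apply tsum_congr
              intro w
              rw [Real.volume_Icc]
              congr 1
              ring
          _ = (2 ^ n : ℕ) • ENNReal.ofReal (∑' k, gseq t ((k + n) + 1)) := by
              rw [tsum_fintype, Finset.sum_const, Finset.card_univ]
              congr 1
              simp
          _ ≤ ENNReal.ofReal ((2:ℝ) ^ n * ∑' k, gseq t ((k + n) + 1)) := by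
              apply le_of_eq
              rw [nsmul_eq_mul, ← ENNReal.ofReal_natCast (2 ^ n),
                ← ENNReal.ofReal_mul (by positivity)]
              congr 1
              push_cast
              ring
      have h0 := pow2_tail_tendsto ht hlim hρ₀ hρhalf
      have hzero : volume (calM t) = 0 := by
        have hle : volume (calM t) ≤ 0 := by
          have h1 := ENNReal.tendsto_ofReal h0
          rw [ENNReal.ofReal_zero] at h1
          exact ge_of_tendsto h1 (Eventually.of_forall hcover)
        exact le_antisymm hle zero_le
      rw [← Set.not_nonempty_iff_eq_empty]
      rintro ⟨x, hx⟩
      have hpos := isOpen_interior.measure_pos volume ⟨x, hx⟩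
      have hle : volume (interior (calM t)) ≤ volume (calM t) :=
        measure_mono interior_subset
      rw [hzero] at hle
      exact absurd (lt_of_lt_of_le hpos hle) (lt_irrefl 0)
    · -- accumulation points
      rintro x ⟨ε, rfl⟩
      rw [accPt_iff_nhds]
      intro U hU
      obtain ⟨η, hη, hball⟩ := Metric.mem_nhds_iff.1 hU
      have hsto : Tendsto (fun n => gseq t (n + 1)) atTop (𝓝 0) := hss.tendsto_atTop_zero
      obtain ⟨n, hn⟩ := (hsto.eventually_lt_const hη).exists
      set ε' : ℕ → Fin 2 := fun k => if k = n then 1 - ε n else ε k with hε'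
      have hgpos := gseq_pos ht (by omega : 1 ≤ n + 1)
      have hd : Mavg t ε' - Mavg t ε = (2 * ((ε n : ℕ) : ℝ) - 1) * gseq t (n + 1) := by
        rw [Mavg_decomp ht hsum ε', Mavg_decomp ht hsum ε]
        have hu := summable_u ht hsum ε
        have hu' := summable_u ht hsum ε'
        rw [Summable.tsum_eq_add_tsum_ite hu' n, Summable.tsum_eq_add_tsum_ite hu n]
        have hR : (∑' k, if k = n then 0 else (1 - ((ε' k : ℕ) : ℝ)) * gseq t (k + 1))
            = ∑' k, if k = n then 0 else (1 - ((ε k : ℕ) : ℝ)) * gseq t (k + 1) := by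
          apply tsum_congr
          intro k
          by_cases hk : k = n
          · simp [hk]
          · have he : ε' k = ε k := by rw [hε']; simp [hk]
            simp only [hk, if_false, he]
        rw [hR]
        have hεn : ε' n = 1 - ε n := by rw [hε']; simp
        rw [hεn, fin2_cast]
        ring
      have h01 : ((ε n : ℕ) : ℝ) = 0 ∨ ((ε n : ℕ) : ℝ) = 1 := by
        have := (ε n).isLt
        interval_cases h : (ε n : ℕ)
        · left; norm_num
        · right; norm_num
      have habs : |Mavg t ε' - Mavg t ε| = gseq t (n + 1) := by
        rw [hd, abs_mul, abs_of_nonneg hgpos.le]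
        rcases h01 with h | h <;> rw [h] <;> norm_num
      refine ⟨Mavg t ε', ⟨hball ?_, ⟨ε', rfl⟩⟩, ?_⟩
      · rw [Metric.mem_ball, Real.dist_eq, habs]
        exact hn
      · intro hcontra
        rw [hcontra, sub_self] at habs
        rw [← habs] at hgpos
        simp at hgpos
  · -- interval case
    intro h2 h1
    have hsum : Summable fun n => t (n + 1) :=
      summable_t ht hlim (show ρ < (ρ + 1) / 2 by linarith) (by linarith)
    obtain ⟨N, hN⟩ := exists_N ht hlim hρ₀ h2 h1 hsum
    have htnn : 0 ≤ ∑' k, gseq t ((k + N) + 1) :=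
      tsum_nonneg fun k => (gseq_pos ht (by omega : 1 ≤ (k + N) + 1)).le
    refine ⟨2 ^ N, fun k => Set.Icc
      (Mavg t (fun _ => 1) + ∑ j : Fin N, (((finFunctionFinEquiv.symm k) j : ℕ) : ℝ)
        * gseq t ((j : ℕ) + 1))
      (Mavg t (fun _ => 1) + ∑ j : Fin N, (((finFunctionFinEquiv.symm k) j : ℕ) : ℝ)
        * gseq t ((j : ℕ) + 1) + ∑' k, gseq t ((k + N) + 1)), ?_, ?_⟩
    · intro k
      exact ⟨_, _, le_add_of_nonneg_right htnn, rfl⟩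
    · rw [calM_eq_union ht hsum N hN]
      exact (finFunctionFinEquiv.symm.surjective.iUnion_comp
        (fun w : Fin N → Fin 2 => Set.Icc
          (Mavg t (fun _ => 1) + ∑ j : Fin N, ((w j : ℕ) : ℝ) * gseq t ((j : ℕ) + 1))
          (Mavg t (fun _ => 1) + ∑ j : Fin N, ((w j : ℕ) : ℝ) * gseq t ((j : ℕ) + 1)
            + ∑' k, gseq t ((k + N) + 1)))).symm
end

section
/- For the Lüroth partition, given by t_n = 1/n for all n ≥ 1, the set 𝓜 satisfies 𝓜 = ∪_{ω∈{0,1}³} I_ω, and this is a union of eight pairwise disjoint closed intervals of equal positive length. -/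
open MeasureTheory Filter Topology

noncomputable def tL : ℕ → ℝ := fun n => (n : ℝ)⁻¹

/-- `a_n = t_{n+1} - t_{n+2}` -/
noncomputable def vA (n : ℕ) : ℝ := ((n:ℝ)+1)⁻¹ - ((n:ℝ)+2)⁻¹

/-- per-coordinate integral value -/
noncomputable def val (n : ℕ) (e : Fin 2) : ℝ :=
  if e = 0 then (2*((n:ℝ)+1)^2*((n:ℝ)+2))⁻¹ else (2*((n:ℝ)+1)*((n:ℝ)+2)^2)⁻¹

noncomputable def dd (n : ℕ) : ℝ := (2*((n:ℝ)+1)^2*((n:ℝ)+2)^2)⁻¹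

lemma vA_eq (n : ℕ) : vA n = (((n:ℝ)+1)*((n:ℝ)+2))⁻¹ := by
  have h1 : ((n:ℝ)+1) ≠ 0 := by positivity
  have h2 : ((n:ℝ)+2) ≠ 0 := by positivity
  unfold vA
  field_simp
  ring

lemma fin2cases (x : Fin 2) : x = 0 ∨ x = 1 := by omega

lemma vA_pos (n : ℕ) : 0 < vA n := by
  rw [vA_eq]; positivity

lemma dd_pos (n : ℕ) : 0 < dd n := by unfold dd; positivity

lemma val_pos (n : ℕ) (e : Fin 2) : 0 < val n e := by
  unfold val; split <;> positivity

lemma val_le_vA (n : ℕ) (e : Fin 2) : val n e ≤ vA n := by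
  rw [vA_eq]
  have h1 : (0:ℝ) < (n:ℝ)+1 := by positivity
  have h2 : (0:ℝ) < (n:ℝ)+2 := by positivity
  unfold val
  split
  · rw [inv_le_inv₀ (by positivity) (by positivity)]
    nlinarith
  · rw [inv_le_inv₀ (by positivity) (by positivity)]
    nlinarith

lemma val_sub (n : ℕ) : val n 0 - val n 1 = dd n := by
  have h1 : ((n:ℝ)+1) ≠ 0 := by positivity
  have h2 : ((n:ℝ)+2) ≠ 0 := by positivity
  simp only [val, dd, if_pos rfl, if_neg (by decide : (1 : Fin 2) ≠ 0), ↓reduceIte]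
  field_simp
  ring

lemma val_one_le (n : ℕ) (e : Fin 2) : val n 1 ≤ val n e := by
  rcases fin2cases e with h | h <;> subst h
  · have := dd_pos n
    have := val_sub n
    linarith
  · exact le_refl _

-- partial sums of vA
lemma sum_vA (k : ℕ) : ∑ i ∈ Finset.range k, vA i = 1 - ((k:ℝ)+1)⁻¹ := by
  induction k with
  | zero => simp
  | succ k ih =>
    rw [Finset.sum_range_succ, ih]
    have h1 : ((k:ℝ)+1) ≠ 0 := by positivity
    have h2 : ((k:ℝ)+2) ≠ 0 := by positivity
    push_cast
    unfold vA
    field_simp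
    ring

lemma summable_vA : Summable vA := by
  apply summable_of_sum_range_le (c := 1) (fun n => (vA_pos n).le)
  intro k
  rw [sum_vA]
  have : (0:ℝ) < ((k:ℝ)+1)⁻¹ := by positivity
  linarith

lemma hasSum_vA : HasSum vA 1 := by
  rw [summable_vA.hasSum_iff_tendsto_nat]
  simp only [sum_vA]
  have h : Tendsto (fun k : ℕ => ((k:ℝ)+1)⁻¹) atTop (𝓝 0) := by
    apply Tendsto.inv_tendsto_atTop
    exact tendsto_atTop_add_const_right _ 1 tendsto_natCast_atTop_atTop
  have := tendsto_const_nhds.sub h (α := ℕ) (f := fun _ : ℕ => (1:ℝ))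
  simpa using this

lemma summable_val (ε : ℕ → Fin 2) : Summable (fun n => val n (ε n)) :=
  Summable.of_nonneg_of_le (fun n => (val_pos n _).le) (fun n => val_le_vA n _) summable_vA

lemma dd_le_vA (n : ℕ) : dd n ≤ vA n := by
  have h := val_sub n
  have := val_pos n 1
  have := val_le_vA n 0
  linarith

lemma summable_dd : Summable dd :=
  Summable.of_nonneg_of_le (fun n => (dd_pos n).le) dd_le_vA summable_vA

lemma integral_piece (B r : ℝ) (hB : 0 < B) (hr0 : 0 < r) (hr1 : r ≤ 1) :
    ∫ z in Set.Icc (0:ℝ) 1, (if r < z then 0 else B*r - B*z) = B * r^2 / 2 := by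
  have hind : (fun z : ℝ => if r < z then (0:ℝ) else B*r - B*z)
      = Set.indicator (Set.Iic r) (fun z => B*r - B*z) := by
    funext z
    by_cases h : r < z
    · rw [if_pos h, Set.indicator_of_notMem (by simpa using h)]
    · rw [if_neg h, Set.indicator_of_mem (by simpa using not_lt.1 h)]
  rw [hind, MeasureTheory.integral_indicator measurableSet_Iic]
  rw [MeasureTheory.Measure.restrict_restrict measurableSet_Iic]
  have hset : Set.Iic r ∩ Set.Icc (0:ℝ) 1 = Set.Icc 0 r := by
    ext z
    simp only [Set.mem_inter_iff, Set.mem_Iic, Set.mem_Icc]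
    constructor
    · rintro ⟨h1, h2, _⟩; exact ⟨h2, h1⟩
    · rintro ⟨h1, h2⟩; exact ⟨h2, h1, le_trans h2 hr1⟩
  rw [hset, MeasureTheory.integral_Icc_eq_integral_Ioc,
    ← intervalIntegral.integral_of_le hr0.le]
  have h1 : IntervalIntegrable (fun _ : ℝ => B * r) MeasureTheory.volume 0 r :=
    intervalIntegrable_const
  have h2 : IntervalIntegrable (fun z : ℝ => B * z) MeasureTheory.volume 0 r := by
    apply Continuous.intervalIntegrable
    continuity
  rw [intervalIntegral.integral_sub h1 h2, intervalIntegral.integral_const,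
    intervalIntegral.integral_const_mul, integral_id]
  simp
  ring

section mavg
variable (ε : ℕ → Fin 2)

noncomputable def Bn (n : ℕ) : ℝ := if ε n = 0 then ((n:ℝ)+2)⁻¹ else ((n:ℝ)+1)⁻¹
noncomputable def rn (n : ℕ) : ℝ := if ε n = 0 then ((n:ℝ)+1)⁻¹ else ((n:ℝ)+2)⁻¹

lemma Bn_pos (n : ℕ) : 0 < Bn ε n := by unfold Bn; split <;> positivity
lemma rn_pos (n : ℕ) : 0 < rn ε n := by unfold rn; split <;> positivity
lemma rn_le_one (n : ℕ) : rn ε n ≤ 1 := by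
  unfold rn; split <;>
  · rw [inv_le_one_iff₀]; right; linarith [Nat.cast_nonneg (α := ℝ) n]

lemma Bn_mul_rn (n : ℕ) : Bn ε n * rn ε n = vA n := by
  have h1 : ((n:ℝ)+1) ≠ 0 := by positivity
  have h2 : ((n:ℝ)+2) ≠ 0 := by positivity
  rw [vA_eq]
  unfold Bn rn
  split <;> · rw [mul_inv, mul_comm]

lemma tL_eps (n : ℕ) : tL (n + 2 - ((ε n : ℕ))) = Bn ε n := by
  unfold tL Bn
  rcases fin2cases (ε n) with h | h <;> rw [h] <;> simp <;> push_cast <;> ring_nf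

lemma tL_vA (n : ℕ) : tL (n + 1) - tL (n + 2) = vA n := by
  unfold tL vA
  push_cast
  ring_nf

lemma val_eq_Brn (n : ℕ) : val n (ε n) = Bn ε n * (rn ε n)^2 / 2 := by
  have h1 : ((n:ℝ)+1) ≠ 0 := by positivity
  have h2 : ((n:ℝ)+2) ≠ 0 := by positivity
  unfold val Bn rn
  rcases fin2cases (ε n) with h | h <;> rw [h] <;> simp <;> field_simp <;> ring

lemma F_eq (z : ℝ) :
    F tL ε z = ∑' n, (if rn ε n < z then vA n else Bn ε n * z) := by
  unfold F
  apply tsum_congr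
  intro n
  rw [tL_eps, tL_vA, ← Bn_mul_rn ε n, mul_div_cancel_left₀ _ (Bn_pos ε n).ne']

lemma G_mem (n : ℕ) (z : ℝ) (hz : z ∈ Set.Icc (0:ℝ) 1) :
    0 ≤ (if rn ε n < z then vA n else Bn ε n * z) ∧
      (if rn ε n < z then vA n else Bn ε n * z) ≤ vA n := by
  obtain ⟨hz0, hz1⟩ := hz
  split
  · exact ⟨(vA_pos n).le, le_refl _⟩
  · rename_i h
    constructor
    · exact mul_nonneg (Bn_pos ε n).le hz0
    · rw [← Bn_mul_rn ε n]
      exact mul_le_mul_of_nonneg_left (not_lt.1 h) (Bn_pos ε n).le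

lemma G_summable (z : ℝ) (hz : z ∈ Set.Icc (0:ℝ) 1) :
    Summable (fun n => if rn ε n < z then vA n else Bn ε n * z) :=
  Summable.of_nonneg_of_le (fun n => (G_mem ε n z hz).1) (fun n => (G_mem ε n z hz).2)
    summable_vA

lemma one_sub_F (z : ℝ) (hz : z ∈ Set.Icc (0:ℝ) 1) :
    1 - F tL ε z = ∑' n, (if rn ε n < z then 0 else vA n - Bn ε n * z) := by
  rw [F_eq, ← hasSum_vA.tsum_eq, ← Summable.tsum_sub summable_vA (G_summable ε z hz)]
  apply tsum_congr
  intro n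
  split <;> simp

lemma H_measurable (n : ℕ) :
    Measurable (fun z : ℝ => if rn ε n < z then 0 else vA n - Bn ε n * z) := by
  apply Measurable.ite
  · exact measurableSet_lt measurable_const measurable_id
  · exact measurable_const
  · exact (measurable_const.sub (measurable_const.mul measurable_id))

lemma mavg_eq : Mavg tL ε = ∑' n, val n (ε n) := by
  unfold Mavg
  rw [MeasureTheory.setIntegral_congr_fun measurableSet_Icc
    (fun z hz => one_sub_F ε z hz)]
  rw [MeasureTheory.integral_tsum]
  · apply tsum_congr
    intro n
    rw [val_eq_Brn]
    rw [← integral_piece (Bn ε n) (rn ε n) (Bn_pos ε n) (rn_pos ε n) (rn_le_one ε n)]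
    apply MeasureTheory.setIntegral_congr_fun measurableSet_Icc
    intro z _
    rw [Bn_mul_rn]
  · exact fun n => ((H_measurable ε n).aestronglyMeasurable)
  · apply ne_of_lt
    apply lt_of_le_of_lt (b := ∑' n, ENNReal.ofReal (vA n))
    · apply ENNReal.tsum_le_tsum
      intro n
      calc ∫⁻ z in Set.Icc (0:ℝ) 1, ↑‖if rn ε n < z then 0 else vA n - Bn ε n * z‖₊
          ≤ ∫⁻ _ in Set.Icc (0:ℝ) 1, ENNReal.ofReal (vA n) := by
            apply MeasureTheory.setLIntegral_mono measurable_const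
            intro z hz
            rw [← enorm_eq_nnnorm, ← ofReal_norm_eq_enorm]
            apply ENNReal.ofReal_le_ofReal
            rw [Real.norm_eq_abs, abs_le]
            have h1 := G_mem ε n z hz
            constructor
            · split
              · linarith [vA_pos n]
              · rcases h1 with ⟨ha, hb⟩
                rw [if_neg (by assumption)] at ha hb
                linarith
            · split
              · linarith [vA_pos n]
              · rcases h1 with ⟨ha, hb⟩
                rw [if_neg (by assumption)] at ha hb
                linarith
        _ = ENNReal.ofReal (vA n) := by
            rw [MeasureTheory.setLIntegral_const]
            simp [Real.volume_Icc]
    · rw [← ENNReal.ofReal_tsum_of_nonneg (fun n => (vA_pos n).le) summable_vA]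
      exact ENNReal.ofReal_lt_top
end mavg

lemma tsum_le_telescope (f g : ℕ → ℝ) (hf : Summable f)
    (h : ∀ j, f j ≤ g j - g (j+1)) (hg : Tendsto g atTop (𝓝 0)) :
    ∑' j, f j ≤ g 0 := by
  have hpart : ∀ k, ∑ i ∈ Finset.range k, f i ≤ g 0 - g k := by
    intro k
    induction k with
    | zero => simp
    | succ k ih =>
      rw [Finset.sum_range_succ]
      have := h k
      linarith
  have h1 : Tendsto (fun k => ∑ i ∈ Finset.range k, f i) atTop (𝓝 (∑' j, f j)) :=
    hf.hasSum.tendsto_sum_nat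
  have h2 : Tendsto (fun k => g 0 - g k) atTop (𝓝 (g 0)) := by
    simpa using tendsto_const_nhds.sub hg
  exact le_of_tendsto_of_tendsto' h1 h2 hpart

lemma le_tsum_telescope (f g : ℕ → ℝ) (hf : Summable f) (h0 : ∀ j, 0 ≤ f j)
    (h : ∀ j, g j - g (j+1) ≤ f j) (hg : Tendsto g atTop (𝓝 0)) :
    g 0 ≤ ∑' j, f j := by
  have hpart : ∀ k, g 0 - g k ≤ ∑' j, f j := by
    intro k
    have h1 : g 0 - g k ≤ ∑ i ∈ Finset.range k, f i := by
      induction k with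
      | zero => simp
      | succ k ih =>
        rw [Finset.sum_range_succ]
        have := h k
        linarith
    exact le_trans h1 (Summable.sum_le_tsum _ (fun i _ => h0 i) hf)
  have h2 : Tendsto (fun k => g 0 - g k) atTop (𝓝 (g 0)) := by
    simpa using tendsto_const_nhds.sub hg
  exact le_of_tendsto h2 (Filter.Eventually.of_forall hpart)

lemma tendsto_inv_shift (c : ℝ) (hc : 1 ≤ c) (a : ℝ) (ha : 1 ≤ a) (m : ℕ) (hm : 1 ≤ m) :
    Tendsto (fun j : ℕ => (c * ((j:ℝ)+a)^m)⁻¹) atTop (𝓝 0) := by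
  apply Tendsto.inv_tendsto_atTop
  have h1 : Tendsto (fun j : ℕ => ((j:ℝ)+a)) atTop atTop :=
    tendsto_atTop_add_const_right _ a tendsto_natCast_atTop_atTop
  apply tendsto_atTop_mono (f := fun j : ℕ => (j:ℝ)+a)
  · intro j
    have hj : (1:ℝ) ≤ (j:ℝ) + a := by
      have : (0:ℝ) ≤ (j:ℝ) := Nat.cast_nonneg j
      linarith
    calc (j:ℝ) + a = 1 * ((j:ℝ)+a)^1 := by ring
    _ ≤ c * ((j:ℝ)+a)^m := by
        apply mul_le_mul
        · exact hc
        · exact pow_le_pow_right₀ hj hm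
        · positivity
        · linarith
  · exact h1

lemma ub_step (x : ℝ) (hx : 1 ≤ x) :
    (2*x^2*(x+1)^2)⁻¹ ≤ (6*x^3)⁻¹ - (6*(x+1)^3)⁻¹ := by
  have hx0 : (0:ℝ) < x := by linarith
  have hx1 : (0:ℝ) < x + 1 := by linarith
  have key : (6*x^3)⁻¹ - (6*(x+1)^3)⁻¹ - (2*x^2*(x+1)^2)⁻¹ = (6*x^3*(x+1)^3)⁻¹ := by
    field_simp
    ring
  have hpos : (0:ℝ) < (6*x^3*(x+1)^3)⁻¹ := by positivity
  linarith

lemma lb_step (x : ℝ) (hx : 1 ≤ x) :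
    (4*x-1)/(24*x^4) - (4*(x+1)-1)/(24*(x+1)^4) ≤ (2*x^2*(x+1)^2)⁻¹ := by
  have hx0 : (0:ℝ) < x := by linarith
  have hx1 : (0:ℝ) < x + 1 := by linarith
  have key : (2*x^2*(x+1)^2)⁻¹ - ((4*x-1)/(24*x^4) - (4*(x+1)-1)/(24*(x+1)^4))
      = (4*x^3+2*x^2+1)/(24*x^4*(x+1)^4) := by
    field_simp
    ring
  have hpos : (0:ℝ) < (4*x^3+2*x^2+1)/(24*x^4*(x+1)^4) := by positivity
  linarith

lemma dd_cast (n : ℕ) (j : ℕ) (h : n = j) : dd n = (2*((j:ℝ)+1)^2*((j:ℝ)+2)^2)⁻¹ := by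
  subst h; rfl

lemma summable_dd_shift (k : ℕ) : Summable (fun j => dd (j + k)) :=
  (summable_nat_add_iff k).2 summable_dd

lemma T3_le : ∑' k, dd (k+3) ≤ 1/384 := by
  have h := tsum_le_telescope (fun k => dd (k+3)) (fun j => (6*((j:ℝ)+4)^3)⁻¹)
    (summable_dd_shift 3) ?_ ?_
  · refine le_trans h ?_
    norm_num
  · intro j
    show dd (j+3) ≤ (6*((j:ℝ)+4)^3)⁻¹ - (6*(((j+1:ℕ):ℝ)+4)^3)⁻¹
    have hcast : dd (j+3) = (2*(((j:ℝ)+4))^2*(((j:ℝ)+4)+1)^2)⁻¹ := by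
      unfold dd; push_cast; ring_nf
    rw [hcast]
    have h1 := ub_step ((j:ℝ)+4) (by linarith [Nat.cast_nonneg (α := ℝ) j])
    have h2 : (6*(((j+1:ℕ):ℝ)+4)^3)⁻¹ = (6*(((j:ℝ)+4)+1)^3)⁻¹ := by push_cast; ring_nf
    rw [h2]
    exact h1
  · exact tendsto_inv_shift 6 (by norm_num) 4 (by norm_num) 3 (by norm_num)

lemma kak_num (x : ℝ) (hx : 5 ≤ x) :
    (2*(x-1)^2*x^2)⁻¹ ≤ (4*x-1)/(24*x^4) := by
  have hx0 : (0:ℝ) < x := by linarith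
  have hx1 : (0:ℝ) < x - 1 := by linarith
  rw [inv_eq_one_div, div_le_div_iff₀ (by positivity) (by positivity)]
  nlinarith [pow_nonneg (sub_nonneg.2 hx) 3, sq_nonneg (x-5), sub_nonneg.2 hx]

lemma kakeya (k : ℕ) : dd (k+3) ≤ ∑' j, dd (j + (k+4)) := by
  have h := le_tsum_telescope (fun j => dd (j + (k+4)))
    (fun j => (4*((j:ℝ)+((k:ℝ)+5))-1)/(24*((j:ℝ)+((k:ℝ)+5))^4))
    (summable_dd_shift (k+4)) (fun j => (dd_pos _).le) ?_ ?_
  · refine le_trans ?_ h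
    show dd (k+3) ≤ (4*(((0:ℕ):ℝ)+((k:ℝ)+5))-1)/(24*(((0:ℕ):ℝ)+((k:ℝ)+5))^4)
    have hcast : dd (k+3) = (2*(((k:ℝ)+5)-1)^2*((k:ℝ)+5)^2)⁻¹ := by
      unfold dd; push_cast; ring_nf
    rw [hcast]
    have h1 := kak_num ((k:ℝ)+5) (by linarith [Nat.cast_nonneg (α := ℝ) k])
    calc (2*(((k:ℝ)+5)-1)^2*((k:ℝ)+5)^2)⁻¹ ≤ (4*((k:ℝ)+5)-1)/(24*((k:ℝ)+5)^4) := h1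
      _ = (4*(((0:ℕ):ℝ)+((k:ℝ)+5))-1)/(24*(((0:ℕ):ℝ)+((k:ℝ)+5))^4) := by norm_num
  · intro j
    show (4*((j:ℝ)+((k:ℝ)+5))-1)/(24*((j:ℝ)+((k:ℝ)+5))^4)
        - (4*(((j+1:ℕ):ℝ)+((k:ℝ)+5))-1)/(24*(((j+1:ℕ):ℝ)+((k:ℝ)+5))^4) ≤ dd (j + (k+4))
    have hcast : dd (j + (k+4)) = (2*((j:ℝ)+((k:ℝ)+5))^2*(((j:ℝ)+((k:ℝ)+5))+1)^2)⁻¹ := by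
      unfold dd; push_cast; ring_nf
    rw [hcast]
    have h1 := lb_step ((j:ℝ)+((k:ℝ)+5))
      (by linarith [Nat.cast_nonneg (α := ℝ) j, Nat.cast_nonneg (α := ℝ) k])
    have h2 : (4*(((j+1:ℕ):ℝ)+((k:ℝ)+5))-1)/(24*(((j+1:ℕ):ℝ)+((k:ℝ)+5))^4)
        = (4*(((j:ℝ)+((k:ℝ)+5))+1)-1)/(24*(((j:ℝ)+((k:ℝ)+5))+1)^4) := by push_cast; ring_nf
    rw [h2]
    exact h1
  · have hb : ∀ j : ℕ, (4*((j:ℝ)+((k:ℝ)+5))-1)/(24*((j:ℝ)+((k:ℝ)+5))^4)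
        ≤ (6*((j:ℝ)+((k:ℝ)+5))^3)⁻¹ := by
      intro j
      have hx : (1:ℝ) ≤ (j:ℝ)+((k:ℝ)+5) := by
        linarith [Nat.cast_nonneg (α := ℝ) j, Nat.cast_nonneg (α := ℝ) k]
      set x := (j:ℝ)+((k:ℝ)+5) with hxdef
      have hx0 : (0:ℝ) < x := by linarith
      have key : (6*x^3)⁻¹ - (4*x-1)/(24*x^4) = (24*x^4)⁻¹ := by
        field_simp
        ring
      have hpos : (0:ℝ) < (24*x^4)⁻¹ := by positivity
      linarith
    have h0 : ∀ j : ℕ, (0:ℝ) ≤ (4*((j:ℝ)+((k:ℝ)+5))-1)/(24*((j:ℝ)+((k:ℝ)+5))^4) := by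
      intro j
      have hx : (1:ℝ) ≤ (j:ℝ)+((k:ℝ)+5) := by
        linarith [Nat.cast_nonneg (α := ℝ) j, Nat.cast_nonneg (α := ℝ) k]
      apply div_nonneg
      · linarith
      · positivity
    exact tendsto_of_tendsto_of_tendsto_of_le_of_le tendsto_const_nhds
      (tendsto_inv_shift 6 (by norm_num) ((k:ℝ)+5)
        (by linarith [Nat.cast_nonneg (α := ℝ) k]) 3 (by norm_num)) h0 hb

lemma greedy (D : ℕ → ℝ) (h0 : ∀ k, 0 ≤ D k) (hs : Summable D)
    (hK : ∀ k, D k ≤ ∑' j, D (j + (k+1))) (x : ℝ) (hx0 : 0 ≤ x)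
    (hx1 : x ≤ ∑' j, D (j + 0)) :
    ∃ η : ℕ → Fin 2, HasSum (fun k => if η k = 0 then D k else 0) x := by
  set T : ℕ → ℝ := fun k => ∑' j, D (j + k) with hT
  have hTsum : ∀ k, Summable (fun j => D (j + k)) :=
    fun k => (summable_nat_add_iff k).2 hs
  have hTrec : ∀ k, T k = D k + T (k+1) := by
    intro k
    have h := Summable.tsum_eq_zero_add (hTsum k)
    simp only [hT]
    rw [h]
    congr 1
    · simp
    · apply tsum_congr
      intro j
      congr 1
      omega
  have hTnonneg : ∀ k, 0 ≤ T k := by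
    intro k
    exact tsum_nonneg (fun j => h0 _)
  -- greedy running sums
  let s : ℕ → ℝ := fun k => Nat.rec 0 (fun k sk => if sk + D k ≤ x then sk + D k else sk) k
  have hs0 : s 0 = 0 := rfl
  have hsucc : ∀ k, s (k+1) = if s k + D k ≤ x then s k + D k else s k := fun _ => rfl
  refine ⟨fun k => if s k + D k ≤ x then 0 else 1, ?_⟩
  have hf : ∀ k, (if (if s k + D k ≤ x then (0:Fin 2) else 1) = 0 then D k else 0)
      = s (k+1) - s k := by
    intro k
    rw [hsucc k]
    by_cases h : s k + D k ≤ x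
    · rw [if_pos h, if_pos h, if_pos rfl]; ring
    · rw [if_neg h, if_neg h, if_neg (by decide)]; ring
  have hpart : ∀ k, ∑ i ∈ Finset.range k, (if (if s i + D i ≤ x then (0:Fin 2) else 1) = 0 then D i else 0) = s k := by
    intro k
    induction k with
    | zero => simp [hs0]
    | succ k ih => rw [Finset.sum_range_succ, ih, hf k]; ring
  have hinv : ∀ k, s k ≤ x ∧ x ≤ s k + T k := by
    intro k
    induction k with
    | zero => exact ⟨by rw [hs0]; exact hx0, by rw [hs0]; simpa [hT] using hx1⟩
    | succ k ih =>
      obtain ⟨ih1, ih2⟩ := ih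
      rw [hsucc k]
      by_cases h : s k + D k ≤ x
      · rw [if_pos h]
        constructor
        · exact h
        · rw [hTrec k] at ih2; linarith
      · rw [if_neg h]
        push_neg at h
        constructor
        · exact ih1
        · have := hK k
          linarith
  -- s k → x
  have hstend : Tendsto s atTop (𝓝 x) := by
    have hub : ∀ k, s k ≤ x := fun k => (hinv k).1
    have hlb : ∀ k, x - T k ≤ s k := fun k => by linarith [(hinv k).2]
    have hT0 : Tendsto T atTop (𝓝 0) := tendsto_sum_nat_add D
    have h1 : Tendsto (fun k => x - T k) atTop (𝓝 x) := by
      simpa using tendsto_const_nhds.sub hT0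
    exact tendsto_of_tendsto_of_tendsto_of_le_of_le h1 tendsto_const_nhds hlb hub
  -- conclude
  have hfs : Summable (fun k => if (if s k + D k ≤ x then (0:Fin 2) else 1) = 0 then D k else 0) := by
    apply Summable.of_nonneg_of_le _ _ hs
    · intro k; split
      · exact h0 k
      · exact le_refl 0
    · intro k; split
      · exact le_refl _
      · exact h0 k
  rw [hfs.hasSum_iff_tendsto_nat]
  apply hstend.congr
  intro k
  rw [hpart k]

lemma val_le_zero (n : ℕ) (e : Fin 2) : val n e ≤ val n 0 := by
  rcases fin2cases e with h | h <;> subst h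
  · exact le_refl _
  · have := val_sub n
    have := dd_pos n
    linarith

noncomputable def Wv (w : Fin 3 → Fin 2) : ℝ := val 0 (w 0) + val 1 (w 1) + val 2 (w 2)
noncomputable def L1 : ℝ := ∑' k : ℕ, val (k+3) 1
noncomputable def L0 : ℝ := ∑' k : ℕ, val (k+3) 0
noncomputable def T3 : ℝ := ∑' k : ℕ, dd (k+3)

lemma summable_val_shift (e : Fin 2) : Summable (fun k => val (k+3) e) :=
  (summable_nat_add_iff (f := fun n => val n e) 3).2 (summable_val (fun _ => e))

lemma summable_dd_shift3 : Summable (fun k => dd (k+3)) :=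
  (summable_nat_add_iff 3).2 summable_dd

lemma L0_sub_L1 : L0 - L1 = T3 := by
  unfold L0 L1 T3
  rw [← Summable.tsum_sub (summable_val_shift 0) (summable_val_shift 1)]
  exact tsum_congr (fun k => val_sub (k+3))

lemma T3_pos : 0 < T3 :=
  Summable.tsum_pos summable_dd_shift3 (fun k => (dd_pos _).le) 0 (dd_pos 3)

lemma cat_ge (w : Fin 3 → Fin 2) (η : ℕ → Fin 2) (k : ℕ) : cat w η (k + 3) = η k := by
  unfold cat
  rw [dif_neg (by omega)]
  congr 1

lemma mavg_cat (w : Fin 3 → Fin 2) (η : ℕ → Fin 2) :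
    Mavg tL (cat w η) = Wv w + ∑' k, val (k+3) (η k) := by
  rw [mavg_eq]
  rw [← Summable.sum_add_tsum_nat_add 3 (summable_val _)]
  have h2 : ∑' (k : ℕ), val (k + 3) (cat w η (k + 3)) = ∑' k, val (k+3) (η k) :=
    tsum_congr (fun k => by rw [cat_ge])
  rw [h2]
  congr 1
  rw [Finset.sum_range_succ, Finset.sum_range_succ, Finset.sum_range_one]
  have c0 : cat w η 0 = w 0 := rfl
  have c1 : cat w η 1 = w 1 := rfl
  have c2 : cat w η 2 = w 2 := rfl
  rw [c0, c1, c2]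
  rfl

lemma Iword_eq (w : Fin 3 → Fin 2) :
    Iword tL w = Set.Icc (Wv w + L1) (Wv w + L0) := by
  unfold Iword
  rw [mavg_cat, mavg_cat]
  rfl

lemma W_apart (w η : Fin 3 → Fin 2) (hne : w ≠ η) : 1/288 ≤ |Wv w - Wv η| := by
  have key : ∀ a b c a' b' c' : Fin 2, (a ≠ a' ∨ b ≠ b' ∨ c ≠ c') →
      1/288 ≤ |(val 0 a + val 1 b + val 2 c) - (val 0 a' + val 1 b' + val 2 c')| := by
    intro a b c a' b' c' hd
    fin_cases a <;> fin_cases b <;> fin_cases c <;>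
      fin_cases a' <;> fin_cases b' <;> fin_cases c' <;>
      first
        | (exact absurd hd (by decide))
        | (rw [le_abs]; norm_num [val, Fin.mk_zero, Fin.mk_one])
  unfold Wv
  apply key
  by_contra h
  push_neg at h
  exact hne (funext fun i => by fin_cases i; exacts [h.1, h.2.1, h.2.2])

lemma calM_subset : calM tL ⊆ ⋃ w : Fin 3 → Fin 2, Iword tL w := by
  rintro x ⟨ε, rfl⟩
  refine Set.mem_iUnion.2 ⟨fun i => ε (i : ℕ), ?_⟩
  have hterm : ∀ (η : ℕ → Fin 2) (n : ℕ),
      cat (fun i : Fin 3 => ε (i : ℕ)) η n = if n < 3 then ε n else η (n - 3) := by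
    intro η n
    unfold cat
    split
    · rfl
    · rfl
  constructor
  · rw [mavg_eq, mavg_eq]
    apply Summable.tsum_le_tsum _ (summable_val _) (summable_val _)
    intro n
    rw [hterm]
    by_cases h : n < 3
    · rw [if_pos h]
    · rw [if_neg h]
      exact val_one_le n (ε n)
  · rw [mavg_eq, mavg_eq]
    apply Summable.tsum_le_tsum _ (summable_val _) (summable_val _)
    intro n
    rw [hterm]
    by_cases h : n < 3
    · rw [if_pos h]
    · rw [if_neg h]
      exact val_le_zero n (ε n)

lemma subset_calM : (⋃ w : Fin 3 → Fin 2, Iword tL w) ⊆ calM tL := by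
  intro x hx
  obtain ⟨w, hw⟩ := Set.mem_iUnion.1 hx
  rw [Iword_eq] at hw
  obtain ⟨hw1, hw2⟩ := hw
  set y := x - (Wv w + L1) with hy
  have hy0 : 0 ≤ y := by simp only [hy]; linarith
  have hyT : y ≤ T3 := by
    have := L0_sub_L1
    simp only [hy]; linarith
  obtain ⟨η, hη⟩ := greedy (fun k => dd (k+3)) (fun k => (dd_pos _).le)
    summable_dd_shift3
    (fun k => by
      have h1 := kakeya k
      have h2 : ∑' j, dd (j + (k+4)) = ∑' j, dd ((j + (k+1)) + 3) :=
        tsum_congr (fun j => by congr 1)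
      rw [h2] at h1
      exact h1) y hy0
    (by
      have h2 : ∑' j : ℕ, dd ((j + 0) + 3) = T3 := tsum_congr (fun j => by norm_num)
      rw [h2]
      exact hyT)
  refine ⟨cat w η, ?_⟩
  rw [mavg_cat]
  have hval : ∀ k, val (k+3) (η k) = val (k+3) 1 + (if η k = 0 then dd (k+3) else 0) := by
    intro k
    rcases fin2cases (η k) with h | h <;> rw [h]
    · rw [if_pos rfl]
      have := val_sub (k+3)
      linarith
    · rw [if_neg (by decide)]
      ring
  rw [tsum_congr hval, Summable.tsum_add (summable_val_shift 1) hη.summable, hη.tsum_eq]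
  show Wv w + (L1 + y) = x
  simp only [hy]
  ring

lemma disjoint_Iword (w η : Fin 3 → Fin 2) (hne : w ≠ η) :
    Disjoint (Iword tL w) (Iword tL η) := by
  rw [Iword_eq, Iword_eq]
  have happ := W_apart w η hne
  have hT1 : T3 ≤ 1/384 := T3_le
  have hT0 := L0_sub_L1
  rw [Set.disjoint_left]
  intro x hx1 hx2
  obtain ⟨ha1, ha2⟩ := hx1
  obtain ⟨hb1, hb2⟩ := hx2
  rcases abs_cases (Wv w - Wv η) with ⟨he, _⟩ | ⟨he, _⟩ <;> rw [he] at happ <;> linarith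

lemma volume_Iword (w : Fin 3 → Fin 2) : volume (Iword tL w) = ENNReal.ofReal T3 := by
  rw [Iword_eq, Real.volume_Icc]
  congr 1
  have := L0_sub_L1
  linarith

theorem luroth_aux_main :
    calM tL =
        (⋃ w : Fin 3 → Fin 2, Iword tL w) ∧
      (∀ w η : Fin 3 → Fin 2, w ≠ η →
        Disjoint (Iword tL w) (Iword tL η)) ∧
      ∃ l : ℝ, 0 < l ∧ ∀ w : Fin 3 → Fin 2,
        volume (Iword tL w) = ENNReal.ofReal l :=
  ⟨Set.Subset.antisymm calM_subset subset_calM, disjoint_Iword,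
    ⟨T3, T3_pos, volume_Iword⟩⟩

/-- For the Lüroth partition `t_n = 1/n`, `𝓜 = ∪_{ω ∈ {0,1}³} I_ω`,
a union of eight pairwise disjoint closed intervals of equal positive length. -/
theorem luroth_calM_eight_intervals :
    calM (fun n => (n : ℝ)⁻¹) =
        (⋃ w : Fin 3 → Fin 2, Iword (fun n => (n : ℝ)⁻¹) w) ∧
      (∀ w η : Fin 3 → Fin 2, w ≠ η →
        Disjoint (Iword (fun n => (n : ℝ)⁻¹) w) (Iword (fun n => (n : ℝ)⁻¹) η)) ∧
      ∃ l : ℝ, 0 < l ∧ ∀ w : Fin 3 → Fin 2,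
        volume (Iword (fun n => (n : ℝ)⁻¹) w) = ENNReal.ofReal l := by
  exact luroth_aux_main
end
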